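/- arXiv:2409.15805 — 7 statements merged into one kernel-verified Lean document; each statement's English description precedes it below -/
import Mathlib

section
/- Let d ≥ 1, let γ ∈ (1, 2], and let ρ > 0, p > 0 and v ∈ ℝ^d with |v| < 1. Define the Lorentz factor Γ = 1/√(1 − |v|²), the specific enthalpy h = 1 + (γ/(γ−1))·(p/ρ), and the conservative variables D = ρΓ, m = ρhΓ²v, E = ρhΓ² − p. Then D > 0 and E > √(D² + |m|²); that is, (D, m, E) ∈ 𝒰'_ad. -/
/-!
With `w = ρ h` and `Γ² (1 - |v|²) = 1`, a direct computation gives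
`E² - D² - |m|² = Γ² ((w - p)² - ρ² - p²) + p²`, so `E > √(D² + |m|²)` as soon as
`(w - p)² > ρ² + p²`. For the ideal gas `w - p = ρ + (γ/(γ-1) - 1) p ≥ ρ + p` because `γ ≤ 2`,
and `(ρ + p)² > ρ² + p²`.
-/

open Real

lemma sqrt_sq_add_norm_sq_lt_of_lorentz {V : Type*} [NormedAddCommGroup V] [NormedSpace ℝ V]
    {v : V} {Γ ρ w p : ℝ} (hΓ : Γ ^ 2 * (1 - ‖v‖ ^ 2) = 1) (hp : 0 ≤ p) (hpw : p < w)
    (hgap : ρ ^ 2 + p ^ 2 < (w - p) ^ 2) :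
    √((ρ * Γ) ^ 2 + ‖(w * Γ ^ 2) • v‖ ^ 2) < w * Γ ^ 2 - p := by
  have hΓ_sq : 1 ≤ Γ ^ 2 := by nlinarith [sq_nonneg (Γ * ‖v‖)]
  have hw : 0 < w := hp.trans_lt hpw
  have hE : 0 < w * Γ ^ 2 - p := by nlinarith
  have hm : ‖(w * Γ ^ 2) • v‖ = w * Γ ^ 2 * ‖v‖ := by
    rw [norm_smul, Real.norm_of_nonneg (by positivity)]
  have hgap_E : (w * Γ ^ 2 - p) ^ 2 - (ρ * Γ) ^ 2 - (w * Γ ^ 2 * ‖v‖) ^ 2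
      = Γ ^ 2 * ((w - p) ^ 2 - ρ ^ 2 - p ^ 2) + p ^ 2 := by
    linear_combination w ^ 2 * Γ ^ 2 * hΓ
  rw [Real.sqrt_lt' hE, hm]
  nlinarith [mul_pos (by positivity : 0 < Γ ^ 2) (sub_pos.2 hgap), sq_nonneg p]

lemma sq_add_sq_lt_sq_add_mul_sub {ρ p k : ℝ} (hρ : 0 < ρ) (hp : 0 < p) (hk : 2 ≤ k) :
    ρ ^ 2 + p ^ 2 < (ρ + k * p - p) ^ 2 := by
  nlinarith [mul_pos hρ hp, mul_nonneg (sub_nonneg.2 hk) hp.le]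

lemma two_le_div_sub_one {γ : ℝ} (hγ1 : 1 < γ) (hγ2 : γ ≤ 2) : 2 ≤ γ / (γ - 1) := by
  rw [le_div_iff₀ (by linarith)]
  linarith

lemma one_div_sqrt_one_sub_sq_mul {x : ℝ} (hx : x < 1) : (1 / √(1 - x)) ^ 2 * (1 - x) = 1 := by
  rw [div_pow, one_pow, Real.sq_sqrt (by linarith)]
  field_simp [(by linarith : 1 - x ≠ 0)]

theorem cons_of_prim_admissible_general (d : ℕ) (γ ρ p : ℝ)
    (v : EuclideanSpace ℝ (Fin d))
    (hγ1 : 1 < γ) (hγ2 : γ ≤ 2) (hρ : 0 < ρ) (hp : 0 < p) (hv : ‖v‖ < 1)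
    (Γ h D E : ℝ) (m : EuclideanSpace ℝ (Fin d))
    (hΓ : Γ = 1 / Real.sqrt (1 - ‖v‖ ^ 2))
    (hh : h = 1 + γ / (γ - 1) * (p / ρ))
    (hD : D = ρ * Γ)
    (hm : m = (ρ * h * Γ ^ 2) • v)
    (hE : E = ρ * h * Γ ^ 2 - p) :
    0 < D ∧ Real.sqrt (D ^ 2 + ‖m‖ ^ 2) < E := by
  have hv_sq : ‖v‖ ^ 2 < 1 := by nlinarith [norm_nonneg v]
  have hΓ_pos : 0 < Γ := by rw [hΓ]; exact one_div_pos.2 (Real.sqrt_pos.2 (by linarith))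
  have hΓ_sq : Γ ^ 2 * (1 - ‖v‖ ^ 2) = 1 := hΓ ▸ one_div_sqrt_one_sub_sq_mul hv_sq
  have hw : ρ * h = ρ + γ / (γ - 1) * p := by rw [hh]; field_simp
  have hk := two_le_div_sub_one hγ1 hγ2
  refine ⟨hD ▸ mul_pos hρ hΓ_pos, ?_⟩
  subst hD hm hE
  refine sqrt_sq_add_norm_sq_lt_of_lorentz hΓ_sq hp.le ?_ ?_ <;> rw [hw]
  · nlinarith
  · exact sq_add_sq_lt_sq_add_mul_sub hρ hp hk

/-- Conservative variables obtained from admissible primitive variables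
`(ρ, p, v)` (with `ρ > 0`, `p > 0`, `|v| < 1`) via the ideal-gas equation of
state belong to the admissible set `𝒰'_ad`. -/
theorem cons_of_prim_admissible (d : ℕ) (hd : 1 ≤ d) (γ ρ p : ℝ)
    (v : EuclideanSpace ℝ (Fin d))
    (hγ1 : 1 < γ) (hγ2 : γ ≤ 2) (hρ : 0 < ρ) (hp : 0 < p) (hv : ‖v‖ < 1)
    (Γ h D E : ℝ) (m : EuclideanSpace ℝ (Fin d))
    (hΓ : Γ = 1 / Real.sqrt (1 - ‖v‖ ^ 2))
    (hh : h = 1 + γ / (γ - 1) * (p / ρ))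
    (hD : D = ρ * Γ)
    (hm : m = (ρ * h * Γ ^ 2) • v)
    (hE : E = ρ * h * Γ ^ 2 - p) :
    0 < D ∧ Real.sqrt (D ^ 2 + ‖m‖ ^ 2) < E :=
  cons_of_prim_admissible_general d γ ρ p v hγ1 hγ2 hρ hp hv Γ h D E m hΓ hh hD hm hE
end

section
/- Let d ≥ 1, let γ ∈ (1, 2], and let (D, m, E) ∈ ℝ × ℝ^d × ℝ satisfy D > 0 and E > √(D² + |m|²). Then there exist unique ρ > 0, p > 0 and v ∈ ℝ^d with |v| < 1 such that D = ρΓ, m = ρhΓ²v and E = ρhΓ² − p, where Γ = 1/√(1 − |v|²) and h = 1 + (γ/(γ−1))·(p/ρ). -/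
noncomputable def relG (M D E c p : ℝ) : ℝ :=
  (E + p) - M ^ 2 / (E + p) - D * Real.sqrt (1 - M ^ 2 / (E + p) ^ 2) - c * p

lemma relG_strictAntiOn (M D E c : ℝ) (hM : 0 ≤ M) (hD : 0 < D) (hME : M < E)
    (hc : 2 ≤ c) : StrictAntiOn (relG M D E c) (Set.Ici 0) := by
  intro p1 hp1 p2 hp2 h12
  simp only [Set.mem_Ici] at hp1 hp2
  have hE : 0 < E := lt_of_le_of_lt hM hME
  have hs1 : 0 < E + p1 := by linarith
  have hs2 : 0 < E + p2 := by linarith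
  have hMs : M ^ 2 < (E + p1) * (E + p2) := by nlinarith
  have hsa : Real.sqrt (1 - M ^ 2 / (E + p1) ^ 2) ≤ Real.sqrt (1 - M ^ 2 / (E + p2) ^ 2) := by
    apply Real.sqrt_le_sqrt
    have h : M ^ 2 / (E + p2) ^ 2 ≤ M ^ 2 / (E + p1) ^ 2 := by
      apply div_le_div_of_nonneg_left (by positivity) (by positivity)
      nlinarith
    linarith
  have hdiv : M ^ 2 / (E + p1) - M ^ 2 / (E + p2) < p2 - p1 := by
    rw [div_sub_div _ _ hs1.ne' hs2.ne', div_lt_iff₀ (by positivity)]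
    nlinarith
  unfold relG
  nlinarith [mul_le_mul_of_nonneg_left hsa hD.le,
    mul_le_mul_of_nonneg_right hc (by linarith : (0:ℝ) ≤ p2 - p1)]

lemma relG_root (M D E c : ℝ) (hM : 0 ≤ M) (hD : 0 < D) (hME : M < E)
    (hDE : D ^ 2 + M ^ 2 < E ^ 2) (hc : 2 ≤ c) :
    ∃ p, 0 < p ∧ relG M D E c p = 0 := by
  have hE : 0 < E := lt_of_le_of_lt hM hME
  -- g 0 > 0
  set t := Real.sqrt (E ^ 2 - M ^ 2) with htdef
  have htD : D < t := by
    rw [htdef]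
    rw [show D = Real.sqrt (D ^ 2) from (Real.sqrt_sq hD.le).symm]
    apply Real.sqrt_lt_sqrt (by positivity)
    nlinarith
  have ht2 : t ^ 2 = E ^ 2 - M ^ 2 := Real.sq_sqrt (by nlinarith)
  have ht0 : 0 < t := lt_trans hD htD
  have hsqrt0 : Real.sqrt (1 - M ^ 2 / (E + 0) ^ 2) = t / E := by
    rw [show 1 - M ^ 2 / (E + 0) ^ 2 = (E ^ 2 - M ^ 2) / E ^ 2 by field_simp; ring,
      Real.sqrt_div (by nlinarith : (0:ℝ) ≤ E ^ 2 - M ^ 2), Real.sqrt_sq hE.le, htdef]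
  have hg0 : 0 < relG M D E c 0 := by
    unfold relG
    rw [hsqrt0]
    have key : E + 0 - M ^ 2 / (E + 0) - D * (t / E) - c * 0 = t * (t - D) / E := by
      field_simp
      linear_combination (-E) * ht2
    rw [key]
    exact div_pos (mul_pos ht0 (by linarith)) hE
  have hgE : relG M D E c E < 0 := by
    unfold relG
    have h2 : (1:ℝ) / 2 ≤ Real.sqrt (1 - M ^ 2 / (E + E) ^ 2) := by
      rw [show ((1:ℝ)/2) = Real.sqrt ((1:ℝ)/4) by
        rw [show ((1:ℝ)/4) = (1/2)^2 by norm_num, Real.sqrt_sq (by norm_num)]]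
      apply Real.sqrt_le_sqrt
      have hq : M ^ 2 / (E + E) ^ 2 ≤ 1 / 4 := by
        rw [div_le_iff₀ (by positivity)]; nlinarith
      linarith
    have h3 : 0 ≤ M ^ 2 / (E + E) := by positivity
    nlinarith [mul_le_mul_of_nonneg_left h2 hD.le,
      mul_le_mul_of_nonneg_right hc hE.le]
  have hcont : ContinuousOn (relG M D E c) (Set.Icc 0 E) := by
    have hne : ∀ p ∈ Set.Icc (0:ℝ) E, E + p ≠ 0 := fun p hp => by
      have := hp.1; positivity
    unfold relG
    apply ContinuousOn.sub
    apply ContinuousOn.sub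
    apply ContinuousOn.sub
    · fun_prop
    · exact ContinuousOn.div continuousOn_const (by fun_prop) hne
    · apply ContinuousOn.mul continuousOn_const
      apply Real.continuous_sqrt.comp_continuousOn
      apply ContinuousOn.sub continuousOn_const
      exact ContinuousOn.div continuousOn_const (by fun_prop)
        (fun p hp => pow_ne_zero _ (hne p hp))
    · fun_prop
  have : (0:ℝ) ∈ Set.Icc (relG M D E c E) (relG M D E c 0) := ⟨hgE.le, hg0.le⟩
  obtain ⟨p, hpmem, hpz⟩ := intermediate_value_Icc' hE.le hcont this
  refine ⟨p, ?_, hpz⟩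
  rcases eq_or_lt_of_le hpmem.1 with h | h
  · exfalso; rw [← h] at hpz; linarith
  · exact h

set_option maxHeartbeats 1000000 in
/-- Every admissible conservative state `(D, m, E)` with `D > 0` and
`E > √(D² + |m|²)` arises from a unique admissible primitive state
`(ρ, p, v)` with `ρ > 0`, `p > 0`, `|v| < 1`, for the ideal-gas equation of
state. -/
theorem prim_of_cons_exists_unique (d : ℕ) (hd : 1 ≤ d) (γ D E : ℝ)
    (m : EuclideanSpace ℝ (Fin d))
    (hγ1 : 1 < γ) (hγ2 : γ ≤ 2)
    (hD : 0 < D) (hE : Real.sqrt (D ^ 2 + ‖m‖ ^ 2) < E) :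
    ∃! x : ℝ × ℝ × EuclideanSpace ℝ (Fin d),
      0 < x.1 ∧ 0 < x.2.1 ∧ ‖x.2.2‖ < 1 ∧
      D = x.1 * (1 / Real.sqrt (1 - ‖x.2.2‖ ^ 2)) ∧
      m = (x.1 * (1 + γ / (γ - 1) * (x.2.1 / x.1)) *
            (1 / Real.sqrt (1 - ‖x.2.2‖ ^ 2)) ^ 2) • x.2.2 ∧
      E = x.1 * (1 + γ / (γ - 1) * (x.2.1 / x.1)) *
            (1 / Real.sqrt (1 - ‖x.2.2‖ ^ 2)) ^ 2 - x.2.1 := by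
  set M := ‖m‖ with hMdef
  have hM : 0 ≤ M := by rw [hMdef]; exact norm_nonneg m
  clear_value M
  have hsqnn : (0:ℝ) ≤ D ^ 2 + M ^ 2 := by positivity
  have hE0 : 0 < E := lt_of_le_of_lt (Real.sqrt_nonneg _) hE
  have hDE : D ^ 2 + M ^ 2 < E ^ 2 := by
    have h := Real.sq_sqrt hsqnn
    nlinarith [Real.sqrt_nonneg (D ^ 2 + M ^ 2)]
  have hME : M < E := by nlinarith
  set c := γ / (γ - 1) with hcdef
  have hγ0 : 0 < γ - 1 := by linarith
  have hc : 2 ≤ c := by rw [hcdef, le_div_iff₀ hγ0]; linarith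
  clear_value c
  obtain ⟨p, hp, hgp⟩ := relG_root M D E c hM hD hME hDE hc
  set s := E + p with hsdef
  clear_value s
  have hs : 0 < s := by rw [hsdef]; linarith
  have hMs : M < s := by linarith
  set v : EuclideanSpace ℝ (Fin d) := s⁻¹ • m with hvdef
  clear_value v
  have hnv : ‖v‖ = M / s := by
    rw [hvdef, norm_smul, Real.norm_eq_abs, abs_inv, abs_of_pos hs, inv_mul_eq_div, ← hMdef]
  have hv1 : ‖v‖ < 1 := by rw [hnv, div_lt_one hs]; exact hMs
  have hvsq : ‖v‖ ^ 2 = M ^ 2 / s ^ 2 := by rw [hnv, div_pow]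
  have hu : 0 < 1 - ‖v‖ ^ 2 := by nlinarith [norm_nonneg v]
  have hsq : 0 < Real.sqrt (1 - ‖v‖ ^ 2) := Real.sqrt_pos.mpr hu
  set ρ := D * Real.sqrt (1 - ‖v‖ ^ 2) with hρdef
  clear_value ρ
  have hρ : 0 < ρ := by rw [hρdef]; positivity
  have hsqs : Real.sqrt (1 - ‖v‖ ^ 2) ^ 2 = 1 - ‖v‖ ^ 2 := Real.sq_sqrt hu.le
  have hΓ : (1 / Real.sqrt (1 - ‖v‖ ^ 2)) ^ 2 = 1 / (1 - ‖v‖ ^ 2) := by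
    rw [div_pow, one_pow, hsqs]
  have hW : ρ * (1 + c * (p / ρ)) * (1 / Real.sqrt (1 - ‖v‖ ^ 2)) ^ 2 = s := by
    rw [hΓ]
    have h1 : ρ * (1 + c * (p / ρ)) = ρ + c * p := by field_simp
    rw [h1, mul_one_div, div_eq_iff hu.ne', hρdef]
    have hveq : Real.sqrt (1 - ‖v‖ ^ 2) = Real.sqrt (1 - M ^ 2 / s ^ 2) := by rw [hvsq]
    rw [hveq, hvsq]
    have hgp' : s - M ^ 2 / s - D * Real.sqrt (1 - M ^ 2 / s ^ 2) - c * p = 0 := by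
      have h' := hgp; unfold relG at h'; rw [← hsdef] at h'; exact h'
    set t := Real.sqrt (1 - M ^ 2 / s ^ 2) with htdef
    field_simp at hgp' ⊢
    linear_combination (-1:ℝ) * hgp'
  refine ⟨⟨ρ, p, v⟩, ⟨hρ, hp, hv1, ?_, ?_, ?_⟩, ?_⟩
  · rw [hρdef]; field_simp
  · show m = _ • v
    rw [hW, hvdef, smul_smul, mul_inv_cancel₀ hs.ne', one_smul]
  · show E = _ - p
    rw [hW, hsdef]; ring
  · rintro ⟨ρ', p', v'⟩ ⟨hρ', hp', hv', h1, h2, h3⟩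
    simp only at hρ' hp' hv' h1 h2 h3
    have hu' : 0 < 1 - ‖v'‖ ^ 2 := by nlinarith [norm_nonneg v']
    have hsq' : 0 < Real.sqrt (1 - ‖v'‖ ^ 2) := Real.sqrt_pos.mpr hu'
    have hsqs' : Real.sqrt (1 - ‖v'‖ ^ 2) ^ 2 = 1 - ‖v'‖ ^ 2 := Real.sq_sqrt hu'.le
    have hΓ' : (1 / Real.sqrt (1 - ‖v'‖ ^ 2)) ^ 2 = 1 / (1 - ‖v'‖ ^ 2) := by
      rw [div_pow, one_pow, hsqs']
    have hρ'eq : ρ' = D * Real.sqrt (1 - ‖v'‖ ^ 2) := by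
      rw [h1]; field_simp
    have hW' : ρ' * (1 + c * (p' / ρ')) * (1 / Real.sqrt (1 - ‖v'‖ ^ 2)) ^ 2 = E + p' := by
      rw [h3]; ring
    have hW'pos : 0 < E + p' := by linarith
    rw [hW'] at h2
    have hnm : M = (E + p') * ‖v'‖ := by
      rw [hMdef, h2, norm_smul, Real.norm_eq_abs, abs_of_pos hW'pos]
    have hgp2 : relG M D E c p' = 0 := by
      unfold relG
      have hveq' : M ^ 2 / (E + p') ^ 2 = ‖v'‖ ^ 2 := by
        rw [hnm, mul_pow]; exact mul_div_cancel_left₀ _ (by positivity)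
      rw [hveq', ← hρ'eq]
      have hkey : ρ' + c * p' = (E + p') * (1 - ‖v'‖ ^ 2) := by
        rw [← hW', hΓ']
        field_simp
      rw [hnm]
      field_simp
      linear_combination (-1:ℝ) * hkey
    have hpp : p' = p :=
      (relG_strictAntiOn M D E c hM hD hME hc).injOn (Set.mem_Ici.mpr hp'.le)
        (Set.mem_Ici.mpr hp.le) (by rw [hgp2, hgp])
    have hvv : v' = v := by
      rw [hvdef, hsdef, ← hpp, h2, smul_smul, inv_mul_cancel₀ (by positivity : (E+p') ≠ 0),
        one_smul]
    have hρρ : ρ' = ρ := by rw [hρ'eq, hvv, hρdef]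
    simp only [Prod.mk.injEq]
    exact ⟨hρρ, hpp, hvv⟩
end

section
/- Let 0 < s < 1 and let v = (v₁, v₂) ∈ ℝ² with |v| < 1, and set Γ = 1/√(1 − |v|²) and Λ = (|v₁|(1 − s²) + s·Γ⁻¹·√((1 − |v|²s²) − (1 − s²)v₁²)) / (1 − |v|²s²). Then |v₁| < Λ < 1. -/
/-!
Write `a = |v₁|`, `V = |v|²`, `D = 1 - V s²` and `R = D - (1 - s²) a²`, so that
`Λ = (a (1 - s²) + s √(1 - V) √R) / D`. Both bounds reduce, after clearing `D > 0` and squaring,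
to the polynomial identities
`R - a² s² (1 - V) = (1 - a²) D` and `(D - a (1 - s²))² - s² (1 - V) R = (1 - s²) D (1 - a)²`,
whose right-hand sides are positive.
-/

/-- Here `u` is the normal velocity `v₁` and `V = |v|²`. -/
def fluxRadicand (s u V : ℝ) : ℝ := (1 - V * s ^ 2) - (1 - s ^ 2) * u ^ 2

noncomputable def fluxSpectralRadius (s u V : ℝ) : ℝ :=
  (|u| * (1 - s ^ 2) + s * √(1 - V) * √(fluxRadicand s u V)) / (1 - V * s ^ 2)

section

variable {s u V : ℝ}

lemma one_sub_mul_sq_pos (hs0 : 0 ≤ s) (hs1 : s < 1) (hV : V < 1) : 0 < 1 - V * s ^ 2 := by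
  have : s ^ 2 < 1 := by nlinarith
  rcases le_or_gt V 0 with hV0 | hV0 <;> nlinarith [sq_nonneg s]

lemma fluxRadicand_eq (s u V : ℝ) :
    fluxRadicand s u V = (1 - u ^ 2) * (1 - V * s ^ 2) + u ^ 2 * s ^ 2 * (1 - V) := by
  rw [fluxRadicand]; ring

lemma fluxRadicand_nonneg (hu : u ^ 2 ≤ 1) (hVs : V * s ^ 2 ≤ 1) (hV : V ≤ 1) :
    0 ≤ fluxRadicand s u V := by
  rw [fluxRadicand_eq]
  have : 0 ≤ 1 - u ^ 2 := by linarith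
  have : 0 ≤ 1 - V * s ^ 2 := by linarith
  have : 0 ≤ 1 - V := by linarith
  positivity

lemma abs_mul_sqrt_lt_sqrt_fluxRadicand (hu : u ^ 2 < 1) (hVs : V * s ^ 2 < 1) (hV : V ≤ 1) :
    |u| * s * √(1 - V) < √(fluxRadicand s u V) := by
  apply Real.lt_sqrt_of_sq_lt
  rw [mul_pow, mul_pow, sq_abs, Real.sq_sqrt (sub_nonneg.2 hV), fluxRadicand_eq]
  linarith [mul_pos (sub_pos.2 hu) (sub_pos.2 hVs)]

lemma mul_sqrt_mul_sqrt_fluxRadicand_lt (hs0 : 0 ≤ s) (hs1 : s < 1) (huV : u ^ 2 ≤ V)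
    (hV : V < 1) :
    s * √(1 - V) * √(fluxRadicand s u V) < 1 - V * s ^ 2 - |u| * (1 - s ^ 2) := by
  set a := |u|
  have ha2 : u ^ 2 = a ^ 2 := (sq_abs u).symm
  have ha1 : a < 1 := by nlinarith [abs_nonneg u]
  have hs2 : 0 < 1 - s ^ 2 := by nlinarith
  have hD := one_sub_mul_sq_pos hs0 hs1 hV
  have hR := fluxRadicand_nonneg (s := s) (u := u) (by linarith) (by linarith) hV.le
  have hrhs : 1 - V * s ^ 2 - a * (1 - s ^ 2) = (1 - a) * (1 - s ^ 2) + s ^ 2 * (1 - V) := by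
    ring
  have key : (1 - V * s ^ 2 - a * (1 - s ^ 2)) ^ 2 - s ^ 2 * (1 - V) * fluxRadicand s u V =
      (1 - s ^ 2) * (1 - V * s ^ 2) * (1 - a) ^ 2 := by
    rw [fluxRadicand, ha2]; ring
  refine lt_of_pow_lt_pow_left₀ 2 ?_ ?_
  · have : 0 ≤ 1 - V := by linarith
    have : 0 < 1 - a := by linarith
    rw [hrhs]; positivity
  · rw [mul_pow, mul_pow, Real.sq_sqrt (by linarith), Real.sq_sqrt hR]
    have : 0 < 1 - a := by linarith
    have : 0 < (1 - s ^ 2) * (1 - V * s ^ 2) * (1 - a) ^ 2 := by positivity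
    linarith

theorem abs_lt_fluxSpectralRadius (hs0 : 0 < s) (hs1 : s < 1) (huV : u ^ 2 ≤ V) (hV : V < 1) :
    |u| < fluxSpectralRadius s u V := by
  have hD := one_sub_mul_sq_pos hs0.le hs1 hV
  have hst : 0 < s * √(1 - V) := mul_pos hs0 (Real.sqrt_pos.2 (sub_pos.2 hV))
  have hlt := abs_mul_sqrt_lt_sqrt_fluxRadicand (s := s) (u := u) (by linarith) (by linarith) hV.le
  rw [fluxSpectralRadius, lt_div_iff₀ hD]
  calc |u| * (1 - V * s ^ 2)
      = |u| * (1 - s ^ 2) + s * √(1 - V) * (|u| * s * √(1 - V)) := by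
        have := Real.mul_self_sqrt (sub_nonneg.2 hV.le)
        linear_combination -|u| * s ^ 2 * this
    _ < _ := by gcongr

theorem fluxSpectralRadius_lt_one (hs0 : 0 < s) (hs1 : s < 1) (huV : u ^ 2 ≤ V) (hV : V < 1) :
    fluxSpectralRadius s u V < 1 := by
  rw [fluxSpectralRadius, div_lt_one (one_sub_mul_sq_pos hs0.le hs1 hV)]
  linarith [mul_sqrt_mul_sqrt_fluxRadicand_lt hs0.le hs1 huV hV]

end

/-- The spectral radius `Λ` of the x-directional flux Jacobian of the 2D
relativistic hydrodynamics equations satisfies `|v₁| < Λ < 1`. -/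
theorem spectral_radius_bounds (s v1 v2 Γ Λ : ℝ)
    (hs0 : 0 < s) (hs1 : s < 1)
    (hv : Real.sqrt (v1 ^ 2 + v2 ^ 2) < 1)
    (hΓ : Γ = 1 / Real.sqrt (1 - (v1 ^ 2 + v2 ^ 2)))
    (hΛ : Λ = (|v1| * (1 - s ^ 2) + s * Γ⁻¹ *
        Real.sqrt ((1 - (v1 ^ 2 + v2 ^ 2) * s ^ 2) - (1 - s ^ 2) * v1 ^ 2)) /
        (1 - (v1 ^ 2 + v2 ^ 2) * s ^ 2)) :
    |v1| < Λ ∧ Λ < 1 := by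
  have hV : v1 ^ 2 + v2 ^ 2 < 1 := by simpa using (Real.sqrt_lt' one_pos).1 hv
  have hv1 : v1 ^ 2 ≤ v1 ^ 2 + v2 ^ 2 := le_add_of_nonneg_right (sq_nonneg v2)
  have hΛ' : Λ = fluxSpectralRadius s v1 (v1 ^ 2 + v2 ^ 2) := by
    rw [hΛ, hΓ, one_div, inv_inv, fluxSpectralRadius, fluxRadicand]
  rw [hΛ']
  exact ⟨abs_lt_fluxSpectralRadius hs0 hs1 hv1 hV, fluxSpectralRadius_lt_one hs0 hs1 hv1 hV⟩
end

section
/- Let 0 < s < 1 and let v = (v₁, v₂) ∈ ℝ² with |v| < 1, and set Γ = 1/√(1 − |v|²), R = √((1 − |v|²s²) − (1 − s²)v₁²), and λ₁ = (v₁(1 − s²) − s·Γ⁻¹·R)/(1 − |v|²s²), λ₂ = (v₁(1 − s²) + s·Γ⁻¹·R)/(1 − |v|²s²), λ₃ = v₁. Then max{|λ₁|, |λ₂|, |λ₃|} = (|v₁|(1 − s²) + s·Γ⁻¹·R)/(1 − |v|²s²). -/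
/-!
Writing `A = v₁(1 - s²)`, `B = s Γ⁻¹ R ≥ 0` and `D = 1 - |v|²s² > 0`, the eigenvalues are
`λ₁,₂ = (A ∓ B)/D`, so `max |λ₁| |λ₂| = (|A| + B)/D`. The acoustic eigenvalues dominate
`λ₃ = v₁` because `R² - v₁²s²Γ⁻² = (1 - v₁²)(1 - |v|²s²) ≥ 0`, i.e. `|v₁| s Γ⁻¹ ≤ R`, and
`|v₁| D = |v₁|(1 - s²) + s Γ⁻¹ · |v₁| s Γ⁻¹`.
-/

theorem max_abs_sub_abs_add {α : Type*} [AddCommGroup α] [LinearOrder α]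
    [IsOrderedAddMonoid α] (a b : α) : max |a - b| |a + b| = |a| + |b| := by
  refine le_antisymm (max_le (abs_sub _ _) (abs_add_le _ _)) ?_
  rcases le_total 0 a with ha | ha <;> rcases le_total 0 b with hb | hb
  · rw [abs_of_nonneg ha, abs_of_nonneg hb]
    exact le_max_of_le_right (le_abs_self _)
  · rw [abs_of_nonneg ha, abs_of_nonpos hb, ← sub_eq_add_neg]
    exact le_max_of_le_left (le_abs_self _)
  · rw [abs_of_nonpos ha, abs_of_nonneg hb]
    exact le_max_of_le_left ((neg_le_abs (a - b)).trans_eq' (by abel))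
  · rw [abs_of_nonpos ha, abs_of_nonpos hb]
    exact le_max_of_le_right ((neg_le_abs (a + b)).trans_eq' (by abel))

theorem abs_mul_mul_sqrt_one_sub_le_sqrt {x y s : ℝ} (hxy : x ^ 2 + y ^ 2 ≤ 1) (hs : s ^ 2 ≤ 1) :
    |x| * s * √(1 - (x ^ 2 + y ^ 2)) ≤ √((1 - (x ^ 2 + y ^ 2) * s ^ 2) - (1 - s ^ 2) * x ^ 2) := by
  apply Real.le_sqrt_of_sq_le
  have hfactor : (1 - (x ^ 2 + y ^ 2) * s ^ 2) - (1 - s ^ 2) * x ^ 2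
      - (|x| * s * √(1 - (x ^ 2 + y ^ 2))) ^ 2 = (1 - x ^ 2) * (1 - (x ^ 2 + y ^ 2) * s ^ 2) := by
    rw [mul_pow, mul_pow, sq_abs, Real.sq_sqrt (by linarith)]
    ring
  have hnonneg : 0 ≤ (1 - x ^ 2) * (1 - (x ^ 2 + y ^ 2) * s ^ 2) := by
    apply mul_nonneg <;> nlinarith [sq_nonneg y, sq_nonneg x, sq_nonneg s]
  linarith

/-- The maximum of the absolute values of the eigenvalues `λ₁, λ₂, λ₃ = v₁` of
the x-directional flux Jacobian of the 2D relativistic hydrodynamics equations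
equals the spectral radius `Λ = (|v₁|(1-s²) + s Γ⁻¹ R)/(1 - |v|² s²)`. -/
theorem spectral_radius_eq_max (s v1 v2 Γ R lam1 lam2 lam3 : ℝ)
    (hs0 : 0 < s) (hs1 : s < 1)
    (hv : Real.sqrt (v1 ^ 2 + v2 ^ 2) < 1)
    (hΓ : Γ = 1 / Real.sqrt (1 - (v1 ^ 2 + v2 ^ 2)))
    (hR : R = Real.sqrt ((1 - (v1 ^ 2 + v2 ^ 2) * s ^ 2) - (1 - s ^ 2) * v1 ^ 2))
    (hl1 : lam1 = (v1 * (1 - s ^ 2) - s * Γ⁻¹ * R) / (1 - (v1 ^ 2 + v2 ^ 2) * s ^ 2))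
    (hl2 : lam2 = (v1 * (1 - s ^ 2) + s * Γ⁻¹ * R) / (1 - (v1 ^ 2 + v2 ^ 2) * s ^ 2))
    (hl3 : lam3 = v1) :
    max (max |lam1| |lam2|) |lam3| =
      (|v1| * (1 - s ^ 2) + s * Γ⁻¹ * R) / (1 - (v1 ^ 2 + v2 ^ 2) * s ^ 2) := by
  have hV : v1 ^ 2 + v2 ^ 2 < 1 := by simpa using (Real.sqrt_lt' one_pos).1 hv
  have hs2 : s ^ 2 < 1 := by nlinarith
  have hD : 0 < 1 - (v1 ^ 2 + v2 ^ 2) * s ^ 2 := by nlinarith [sq_nonneg v1, sq_nonneg v2]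
  have hΓinv : Γ⁻¹ = √(1 - (v1 ^ 2 + v2 ^ 2)) := by rw [hΓ, one_div, inv_inv]
  have hΓinv_sq : Γ⁻¹ ^ 2 = 1 - (v1 ^ 2 + v2 ^ 2) := by rw [hΓinv, Real.sq_sqrt (by linarith)]
  have hsΓ : 0 ≤ s * Γ⁻¹ := by rw [hΓinv]; positivity
  have hB : 0 ≤ s * Γ⁻¹ * R := mul_nonneg hsΓ (hR ▸ Real.sqrt_nonneg _)
  have hmax12 : max |lam1| |lam2| =
      (|v1| * (1 - s ^ 2) + s * Γ⁻¹ * R) / (1 - (v1 ^ 2 + v2 ^ 2) * s ^ 2) := by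
    rw [hl1, hl2, abs_div, abs_div, abs_of_pos hD, max_div_div_right hD.le, max_abs_sub_abs_add,
      abs_mul, abs_of_pos (by linarith : 0 < 1 - s ^ 2), abs_of_nonneg hB]
  have hdom : |v1| * s * Γ⁻¹ ≤ R := by
    rw [hΓinv, hR]; exact abs_mul_mul_sqrt_one_sub_le_sqrt hV.le hs2.le
  rw [hmax12, hl3]
  refine max_eq_left ((le_div_iff₀ hD).2 ?_)
  calc |v1| * (1 - (v1 ^ 2 + v2 ^ 2) * s ^ 2)
      = |v1| * (1 - s ^ 2) + s * Γ⁻¹ * (|v1| * s * Γ⁻¹) := by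
        linear_combination (-|v1| * s ^ 2) * hΓinv_sq
    _ ≤ |v1| * (1 - s ^ 2) + s * Γ⁻¹ * R := by gcongr
end

section
/- Let γ ∈ (1, 2], ρ > 0, p > 0 and v = (v₁, v₂) ∈ ℝ² with |v| < 1. Set Γ = 1/√(1 − |v|²), h = 1 + (γ/(γ−1))·(p/ρ), s = √(γp/(ρh)), Λ = (|v₁|(1 − s²) + s·Γ⁻¹·√((1 − |v|²s²) − (1 − s²)v₁²)) / (1 − |v|²s²), and let m₁ = ρhΓ²v₁ and E = ρhΓ² − p. Then E + m₁/Λ > 0 and E − m₁/Λ > 0. -/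
set_option maxHeartbeats 1000000


theorem rhd_aux_g (γ t : ℝ) (hγ2 : γ ≤ 2) (ht : 0 < t) (hlt : t < γ - 1) :
    t * (1 + γ - t) ^ 2 < 4 * (γ - 1) := by
  have hd : 0 < γ - 1 - t := by linarith
  nlinarith [mul_pos hd hd, mul_pos (mul_pos hd hd) hd,
    mul_nonneg hd.le (sub_nonneg.mpr hγ2),
    mul_nonneg (mul_nonneg hd.le hd.le) (sub_nonneg.mpr hγ2)]

theorem rhd_aux_core (γ t U x Q : ℝ) (hγ1 : 1 < γ) (hγ2 : γ ≤ 2)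
    (ht : 0 < t) (hlt : t < γ - 1) (hU0 : 0 < U) (hU1 : U ≤ 1)
    (hx0 : 0 ≤ x) (hxU : x ≤ 1 - U) (hQ : U ≤ Q) :
    x * t * U * (1 + γ - t) ^ 2 < Q * (γ - t * U) ^ 2 := by
  have ht1 : t < 1 := by linarith
  have h3 : (γ - U) ^ 2 ≤ (γ - t * U) ^ 2 := by
    have h4 : γ - U ≤ γ - t * U := by nlinarith [mul_le_mul_of_nonneg_right ht1.le hU0.le]
    have h5 : 0 ≤ γ - U := by linarith
    exact pow_le_pow_left₀ h5 h4 2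
  have h6 : 4 * (γ - 1) * (1 - U) ≤ (γ - U) ^ 2 := by nlinarith [sq_nonneg (γ + U - 2)]
  have hg := rhd_aux_g γ t hγ2 ht hlt
  rcases eq_or_lt_of_le hU1 with hU | hU
  · have hx : x = 0 := le_antisymm (by linarith) hx0
    rw [hx]
    have hQ0 : 0 < Q := lt_of_lt_of_le hU0 hQ
    have hγtU : 0 < γ - t * U := by nlinarith
    have : 0 < Q * (γ - t * U) ^ 2 := by positivity
    linarith
  · have L1 : U * (γ - t * U) ^ 2 ≤ Q * (γ - t * U) ^ 2 :=
      mul_le_mul_of_nonneg_right hQ (sq_nonneg _)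
    have L2 : U * (γ - U) ^ 2 ≤ U * (γ - t * U) ^ 2 :=
      mul_le_mul_of_nonneg_left h3 hU0.le
    have L3 : U * (4 * (γ - 1) * (1 - U)) ≤ U * (γ - U) ^ 2 :=
      mul_le_mul_of_nonneg_left h6 hU0.le
    have R1 : x * (t * U * (1 + γ - t) ^ 2) ≤ (1 - U) * (t * U * (1 + γ - t) ^ 2) :=
      mul_le_mul_of_nonneg_right hxU (by positivity)
    have R2 : (U * (1 - U)) * (t * (1 + γ - t) ^ 2) < (U * (1 - U)) * (4 * (γ - 1)) :=
      mul_lt_mul_of_pos_left hg (mul_pos hU0 (sub_pos.mpr hU))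
    nlinarith [L1, L2, L3, R1, R2]

/-- The energy components `E ± m₁/Λ` of the auxiliary states `u ± (1/Λ) f(u)`
of the 2D relativistic hydrodynamics equations are positive. -/
theorem energy_shift_positive (γ ρ p v1 v2 Γ h s Λ m1 E : ℝ)
    (hγ1 : 1 < γ) (hγ2 : γ ≤ 2) (hρ : 0 < ρ) (hp : 0 < p)
    (hv : Real.sqrt (v1 ^ 2 + v2 ^ 2) < 1)
    (hΓ : Γ = 1 / Real.sqrt (1 - (v1 ^ 2 + v2 ^ 2)))
    (hh : h = 1 + γ / (γ - 1) * (p / ρ))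
    (hs : s = Real.sqrt (γ * p / (ρ * h)))
    (hΛ : Λ = (|v1| * (1 - s ^ 2) + s * Γ⁻¹ *
        Real.sqrt ((1 - (v1 ^ 2 + v2 ^ 2) * s ^ 2) - (1 - s ^ 2) * v1 ^ 2)) /
        (1 - (v1 ^ 2 + v2 ^ 2) * s ^ 2))
    (hm1 : m1 = ρ * h * Γ ^ 2 * v1)
    (hE : E = ρ * h * Γ ^ 2 - p) :
    0 < E + m1 / Λ ∧ 0 < E - m1 / Λ := by
  have hγ1' : (0:ℝ) < γ - 1 := by linarith
  set V2 : ℝ := v1 ^ 2 + v2 ^ 2 with hV2def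
  have hV2nn : 0 ≤ V2 := by positivity
  clear_value V2
  have hV2lt : V2 < 1 := by
    nlinarith [Real.sq_sqrt hV2nn, Real.sqrt_nonneg V2]
  set U : ℝ := 1 - V2 with hUdef
  clear_value U
  have hU0 : 0 < U := by rw [hUdef]; linarith
  have hU1 : U ≤ 1 := by rw [hUdef]; linarith
  have hsU0 : 0 < Real.sqrt U := Real.sqrt_pos.mpr hU0
  have hsU2 : Real.sqrt U ^ 2 = U := Real.sq_sqrt hU0.le
  have hΓ2 : Γ ^ 2 = 1 / U := by
    rw [hΓ, div_pow, one_pow, hsU2]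
  have hΓinv : Γ⁻¹ = Real.sqrt U := by
    rw [hΓ, one_div, inv_inv]
  set H : ℝ := ρ * h with hHdef
  clear_value H
  have hHval : (γ - 1) * H = (γ - 1) * ρ + γ * p := by
    rw [hHdef, hh]; field_simp
  have hHpos : 0 < H := by nlinarith
  have hHp : p < H := by nlinarith
  set t : ℝ := γ * p / H with htdef
  clear_value t
  have htpos : 0 < t := by rw [htdef]; positivity
  have ht_lt : t < γ - 1 := by
    rw [htdef, div_lt_iff₀ hHpos]; nlinarith
  have ht1 : t < 1 := by linarith
  have hs2 : s ^ 2 = t := by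
    rw [hs, Real.sq_sqrt htpos.le]
  have hspos : 0 < s := by rw [hs]; exact Real.sqrt_pos.mpr htpos
  have hp_eq : p = t * H / γ := by
    rw [htdef]; field_simp
  set Q : ℝ := (1 - V2 * t) - (1 - t) * v1 ^ 2 with hQdef
  clear_value Q
  have hQU : U ≤ Q := by
    have h1 : Q - U = v2 ^ 2 * (1 - t) := by
      rw [hQdef, hUdef, hV2def]; ring
    nlinarith [mul_nonneg (sq_nonneg v2) (by linarith : (0:ℝ) ≤ 1 - t)]
  have hQpos : 0 < Q := lt_of_lt_of_le hU0 hQU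
  have hD0 : 0 < 1 - V2 * t := by nlinarith
  set w : ℝ := |v1| with hwdef
  have hw0 : 0 ≤ w := abs_nonneg v1
  have hw2 : w ^ 2 = v1 ^ 2 := sq_abs v1
  clear_value w
  have hv1U : v1 ^ 2 ≤ 1 - U := by rw [hUdef, hV2def]; nlinarith [sq_nonneg v2]
  have hsQ0 : 0 < Real.sqrt Q := Real.sqrt_pos.mpr hQpos
  have hsQ2 : Real.sqrt Q ^ 2 = Q := Real.sq_sqrt hQpos.le
  have hγtU : 0 < γ - t * U := by
    have h2 := mul_le_mul_of_nonneg_left hU1 htpos.le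
    linarith
  have hcore : v1 ^ 2 * t * U * (1 + γ - t) ^ 2 < Q * (γ - t * U) ^ 2 :=
    rhd_aux_core γ t U (v1 ^ 2) Q hγ1 hγ2 htpos ht_lt hU0 hU1 (sq_nonneg v1) hv1U hQU
  -- key inequality (unsquared)
  have hkey : w * t * U * (1 + γ - t) < s * Real.sqrt U * Real.sqrt Q * (γ - t * U) := by
    apply lt_of_pow_lt_pow_left₀ 2 (by positivity)
    have e1 : (s * Real.sqrt U * Real.sqrt Q * (γ - t * U)) ^ 2
        = t * U * (Q * (γ - t * U) ^ 2) := by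
      rw [mul_pow, mul_pow, mul_pow, hs2, hsU2, hsQ2]; ring
    have e2 : (w * t * U * (1 + γ - t)) ^ 2
        = t * U * (v1 ^ 2 * t * U * (1 + γ - t) ^ 2) := by
      rw [mul_pow, mul_pow, mul_pow, hw2]; ring
    rw [e1, e2]
    exact mul_lt_mul_of_pos_left hcore (mul_pos htpos hU0)
  -- Λ in normalized form
  have hΛval : Λ = (w * (1 - t) + s * Real.sqrt U * Real.sqrt Q) / (1 - V2 * t) := by
    rw [hΛ, hΓinv, hs2, ← hQdef]
  have hNpos : 0 < w * (1 - t) + s * Real.sqrt U * Real.sqrt Q := by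
    have h7 : 0 < s * Real.sqrt U * Real.sqrt Q := by positivity
    have h8 : 0 ≤ w * (1 - t) := mul_nonneg hw0 (by linarith)
    linarith
  have hΛpos : 0 < Λ := by rw [hΛval]; positivity
  -- E and m1
  have hEval : E = H / U - p := by rw [hE, hΓ2]; ring
  have hEpos : 0 < E := by
    have h10 := mul_le_mul_of_nonneg_left hU1 hHpos.le
    have h11 : H ≤ H / U := by rw [le_div_iff₀ hU0]; linarith
    rw [hEval]; linarith
  have hm1abs : |m1| = H / U * w := by
    have hm1' : m1 = H / U * v1 := by rw [hm1, hΓ2]; ring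
    rw [hm1', abs_mul, abs_of_pos (div_pos hHpos hU0), hwdef]
  -- the crucial bound |m1| < Λ * E
  have habs : |m1| < Λ * E := by
    rw [hΛval, hEval, hm1abs,
      div_mul_eq_mul_div (w * (1 - t) + s * Real.sqrt U * Real.sqrt Q) (1 - V2 * t)
        (H / U - p), lt_div_iff₀ hD0]
    have heq : (w * (1 - t) + s * Real.sqrt U * Real.sqrt Q) * (H / U - p)
        - H / U * w * (1 - V2 * t)
        = (H / (γ * U)) * (s * Real.sqrt U * Real.sqrt Q * (γ - t * U)
            - w * t * U * (1 + γ - t)) := by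
      rw [hp_eq, hUdef]
      have hne1 : (1 : ℝ) - V2 ≠ 0 := by linarith
      have hγ0 : γ ≠ 0 := by linarith
      field_simp
      ring
    have h9 : 0 < H / (γ * U) * (s * Real.sqrt U * Real.sqrt Q * (γ - t * U)
        - w * t * U * (1 + γ - t)) :=
      mul_pos (div_pos hHpos (mul_pos (by linarith : (0:ℝ) < γ) hU0)) (sub_pos.mpr hkey)
    linarith [heq, h9]
  have habs' : |m1 / Λ| < E := by
    rw [abs_div, abs_of_pos hΛpos, div_lt_iff₀ hΛpos]
    linarith [habs]
  obtain ⟨h1, h2⟩ := abs_lt.mp habs'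
  exact ⟨by linarith, by linarith⟩
end

section
/- Let γ ∈ (1, 2], ρ > 0, p > 0 and v = (v₁, v₂) ∈ ℝ² with |v| < 1. Set Γ = 1/√(1 − |v|²), h = 1 + (γ/(γ−1))·(p/ρ), s = √(γp/(ρh)), Λ = (|v₁|(1 − s²) + s·Γ⁻¹·√((1 − |v|²s²) − (1 − s²)v₁²)) / (1 − |v|²s²), and let D = ρΓ, m₁ = ρhΓ²v₁, m₂ = ρhΓ²v₂, E = ρhΓ² − p. Then for each sign σ ∈ {+1, −1}: (D + σ·Dv₁/Λ)² + (m₁ + σ·(m₁v₁ + p)/Λ)² + (m₂ + σ·m₂v₁/Λ)² − (E + σ·m₁/Λ)² < 0. -/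
set_option maxHeartbeats 1000000 in
/-- For the auxiliary states `u ± (1/Λ) f(u)` of the 2D relativistic
hydrodynamics equations, the quantity
`D̃² + m̃₁² + m̃₂² - Ẽ²` is negative for both signs. -/
theorem aux_state_negative_quadratic (γ ρ p v1 v2 Γ h s Λ D m1 m2 E : ℝ)
    (hγ1 : 1 < γ) (hγ2 : γ ≤ 2) (hρ : 0 < ρ) (hp : 0 < p)
    (hv : Real.sqrt (v1 ^ 2 + v2 ^ 2) < 1)
    (hΓ : Γ = 1 / Real.sqrt (1 - (v1 ^ 2 + v2 ^ 2)))
    (hh : h = 1 + γ / (γ - 1) * (p / ρ))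
    (hs : s = Real.sqrt (γ * p / (ρ * h)))
    (hΛ : Λ = (|v1| * (1 - s ^ 2) + s * Γ⁻¹ *
        Real.sqrt ((1 - (v1 ^ 2 + v2 ^ 2) * s ^ 2) - (1 - s ^ 2) * v1 ^ 2)) /
        (1 - (v1 ^ 2 + v2 ^ 2) * s ^ 2))
    (hD : D = ρ * Γ)
    (hm1 : m1 = ρ * h * Γ ^ 2 * v1)
    (hm2 : m2 = ρ * h * Γ ^ 2 * v2)
    (hE : E = ρ * h * Γ ^ 2 - p) :
    ∀ σ : ℝ, σ = 1 ∨ σ = -1 →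
      (D + σ * (D * v1) / Λ) ^ 2 + (m1 + σ * (m1 * v1 + p) / Λ) ^ 2 +
        (m2 + σ * (m2 * v1) / Λ) ^ 2 - (E + σ * m1 / Λ) ^ 2 < 0 := by
  intro σ hσ
  have hσ2 : σ ^ 2 = 1 := by rcases hσ with h1 | h1 <;> rw [h1] <;> norm_num
  have hγ0 : (0:ℝ) < γ - 1 := by linarith
  have hq0 : (0:ℝ) ≤ v1 ^ 2 + v2 ^ 2 := by positivity
  have hq1 : v1 ^ 2 + v2 ^ 2 < 1 := by
    nlinarith only [Real.sq_sqrt hq0, Real.sqrt_nonneg (v1 ^ 2 + v2 ^ 2), hv]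
  have h1q : (0:ℝ) < 1 - (v1 ^ 2 + v2 ^ 2) := by linarith
  -- Γ facts
  have hsq1q : Real.sqrt (1 - (v1 ^ 2 + v2 ^ 2)) ^ 2 = 1 - (v1 ^ 2 + v2 ^ 2) :=
    Real.sq_sqrt h1q.le
  have hsq1q0 : 0 < Real.sqrt (1 - (v1 ^ 2 + v2 ^ 2)) := Real.sqrt_pos.mpr h1q
  have hΓ0 : 0 < Γ := by rw [hΓ]; positivity
  have hΓ2 : Γ ^ 2 * (1 - (v1 ^ 2 + v2 ^ 2)) = 1 := by
    rw [hΓ, div_pow, one_pow, hsq1q]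
    field_simp
  have hΓiv : Γ⁻¹ = Real.sqrt (1 - (v1 ^ 2 + v2 ^ 2)) := by
    rw [hΓ, one_div, inv_inv]
  -- h facts
  have hh1 : 1 < h := by
    have h4 : 0 < γ / (γ - 1) * (p / ρ) :=
      mul_pos (div_pos (by linarith) hγ0) (div_pos hp hρ)
    rw [hh]; linarith
  have hh0 : (0:ℝ) < h := by linarith
  have hγp : γ * p = (γ - 1) * ρ * (h - 1) := by
    rw [hh]
    field_simp
    ring
  -- s facts
  have hs2 : s ^ 2 = γ * p / (ρ * h) := by
    rw [hs]; exact Real.sq_sqrt (by positivity)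
  have hs0 : 0 < s := by rw [hs]; positivity
  have hρhs : ρ * h * s ^ 2 = γ * p := by rw [hs2]; field_simp
  have hγh : (γ - 1) * ρ * (h - 1) < ρ * h := by
    have e1 : (0:ℝ) ≤ (2 - γ) * (h - 1) := by
      apply mul_nonneg <;> linarith
    have e2 : (γ - 1) * (h - 1) < h := by
      have e3 : (γ - 1) * (h - 1) = (h - 1) - (2 - γ) * (h - 1) := by ring
      linarith only [e1, e3, hh1]
    have e4 := mul_lt_mul_of_pos_left e2 hρ
    linarith only [e4]
  have hs1 : s ^ 2 < 1 := by
    have : ρ * h * s ^ 2 < ρ * h * 1 := by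
      rw [hρhs, hγp]; linarith
    exact lt_of_mul_lt_mul_left this (by positivity)
  -- d, X, Y
  set d : ℝ := 1 - v1 ^ 2 - s ^ 2 * v2 ^ 2 with hd
  have hd0 : 0 < d := by
    have e5 : s ^ 2 * v2 ^ 2 ≤ 1 * v2 ^ 2 := mul_le_mul_of_nonneg_right hs1.le (sq_nonneg v2)
    rw [hd]; linarith only [e5, hq1, sq_nonneg v1, sq_nonneg v2]
  set X : ℝ := Real.sqrt ((1 - (v1 ^ 2 + v2 ^ 2) * s ^ 2) - (1 - s ^ 2) * v1 ^ 2) with hXdef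
  have hXd : X = Real.sqrt d := by rw [hXdef]; congr 1; rw [hd]; ring
  have hX2 : X ^ 2 = d := by rw [hXd]; exact Real.sq_sqrt hd0.le
  have hX0 : 0 < X := by rw [hXd]; exact Real.sqrt_pos.mpr hd0
  set Y : ℝ := s * Γ⁻¹ * X with hYdef
  have hY0 : 0 < Y := by
    apply mul_pos (mul_pos hs0 _) hX0
    rw [hΓiv]; exact hsq1q0
  have hY2 : Y ^ 2 = s ^ 2 * (1 - (v1 ^ 2 + v2 ^ 2)) * d := by
    rw [hYdef, mul_pow, mul_pow, hX2, hΓiv, hsq1q]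
  -- c, Λ
  set c : ℝ := 1 - (v1 ^ 2 + v2 ^ 2) * s ^ 2 with hc
  have hc0 : 0 < c := by
    have e5 : (v1 ^ 2 + v2 ^ 2) * s ^ 2 ≤ (v1 ^ 2 + v2 ^ 2) * 1 :=
      mul_le_mul_of_nonneg_left hs1.le hq0
    rw [hc]; linarith only [e5, hq1]
  have hΛc : Λ * c = |v1| * (1 - s ^ 2) + Y := by
    rw [hΛ]; field_simp
  -- N
  set N : ℝ := Y - |v1| * s ^ 2 * (1 - (v1 ^ 2 + v2 ^ 2)) with hNdef
  have hN0 : 0 < N := by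
    have habs : |v1| ^ 2 = v1 ^ 2 := sq_abs v1
    have hinner : 0 < d - v1 ^ 2 * s ^ 2 * (1 - (v1 ^ 2 + v2 ^ 2)) := by
      have e : d - v1 ^ 2 * s ^ 2 * (1 - (v1 ^ 2 + v2 ^ 2))
          = (1 - (v1 ^ 2 + v2 ^ 2)) * (1 - v1 ^ 2)
            + (1 - s ^ 2) * (v2 ^ 2 + v1 ^ 2 * (1 - (v1 ^ 2 + v2 ^ 2))) := by
        rw [hd]; ring
      have p1 : 0 < (1 - (v1 ^ 2 + v2 ^ 2)) * (1 - v1 ^ 2) := by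
        apply mul_pos h1q; linarith only [hq1, sq_nonneg v2]
      have p2 : 0 ≤ (1 - s ^ 2) * (v2 ^ 2 + v1 ^ 2 * (1 - (v1 ^ 2 + v2 ^ 2))) := by
        apply mul_nonneg (by linarith)
        have := sq_nonneg v1; have := sq_nonneg v2; positivity
      linarith [e ▸ (by linarith : (0:ℝ) < (1 - (v1 ^ 2 + v2 ^ 2)) * (1 - v1 ^ 2)
        + (1 - s ^ 2) * (v2 ^ 2 + v1 ^ 2 * (1 - (v1 ^ 2 + v2 ^ 2))))]
    have hZ : (|v1| * s ^ 2 * (1 - (v1 ^ 2 + v2 ^ 2))) ^ 2 < Y ^ 2 := by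
      have e : Y ^ 2 - (|v1| * s ^ 2 * (1 - (v1 ^ 2 + v2 ^ 2))) ^ 2
          = s ^ 2 * (1 - (v1 ^ 2 + v2 ^ 2))
            * (d - v1 ^ 2 * s ^ 2 * (1 - (v1 ^ 2 + v2 ^ 2))) := by
        rw [hY2]; linear_combination (- s ^ 4 * (1 - (v1 ^ 2 + v2 ^ 2)) ^ 2) * habs
      have : 0 < s ^ 2 * (1 - (v1 ^ 2 + v2 ^ 2))
          * (d - v1 ^ 2 * s ^ 2 * (1 - (v1 ^ 2 + v2 ^ 2))) := by
        apply mul_pos (by positivity) hinner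
      linarith
    have := lt_of_pow_lt_pow_left₀ 2 hY0.le hZ
    rw [hNdef]; linarith
  have hΛu : (Λ - |v1|) * c = N := by
    rw [hNdef, hc]; rw [hc] at hΛc; linear_combination hΛc
  have hΛc0 : 0 < Λ * c := by
    rw [hΛc]
    have := abs_nonneg v1
    have : 0 ≤ |v1| * (1 - s ^ 2) := by apply mul_nonneg (abs_nonneg v1); linarith
    linarith
  have hΛ0 : 0 < Λ := by
    by_contra hcon
    push_neg at hcon
    have h9 : Λ * c ≤ 0 := mul_nonpos_iff.mpr (Or.inr ⟨hcon, hc0.le⟩)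
    linarith only [h9, hΛc0]
  have hΛu0 : 0 ≤ Λ - |v1| := by
    by_contra hcon
    push_neg at hcon
    have h9 : (Λ - |v1|) * c < 0 := mul_neg_of_neg_of_pos hcon hc0
    rw [hΛu] at h9
    linarith only [h9, hN0]
  -- key identity I
  have hI : s ^ 2 * (1 - (v1 ^ 2 + v2 ^ 2)) * (c ^ 2 - (|v1| * (1 - s ^ 2) + Y) ^ 2)
      = (1 - s ^ 2) * N ^ 2 := by
    rw [hNdef, hc]
    linear_combination (-(1 - (v1 ^ 2 + v2 ^ 2) * s ^ 2)) * hY2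
      - s ^ 2 * (1 - (v1 ^ 2 + v2 ^ 2)) * (1 - (v1 ^ 2 + v2 ^ 2) * s ^ 2) * (1 - s ^ 2) * (sq_abs v1)
  -- B
  set B : ℝ := ρ ^ 2 - ρ ^ 2 * h ^ 2 + 2 * ρ * h * p with hB
  have hγB : γ * B = ρ ^ 2 * (h - 1) * (h * (γ - 2) - γ) := by
    rw [hB]; linear_combination (2 * ρ * h) * hγp
  have hBneg : B < 0 := by
    have e1 : h * (γ - 2) - γ < 0 := by
      have : h * (γ - 2) ≤ 0 := mul_nonpos_iff.mpr (Or.inl ⟨hh0.le, by linarith⟩)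
      linarith only [this, hγ1]
    have e2 : ρ ^ 2 * (h - 1) * (h * (γ - 2) - γ) < 0 := by
      apply mul_neg_of_pos_of_neg _ e1
      exact mul_pos (pow_pos hρ 2) (by linarith only [hh1])
    by_contra hcon
    push_neg at hcon
    have : 0 ≤ γ * B := mul_nonneg (by linarith only [hγ1]) hcon
    linarith only [this, hγB, e2]
  have hAneg : Γ ^ 2 * B < 0 := mul_neg_of_pos_of_neg (by positivity) hBneg
  -- final scalar inequality
  have hfin : γ * (γ * B + ρ * h * p - γ * p ^ 2)
      = ρ ^ 2 * (h - 1) * ((1 - 2 * γ) + h * (γ - 2)) := by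
    rw [hB]
    linear_combination ((2 * γ + 1) * ρ * h - γ * p - (γ - 1) * ρ * (h - 1)) * hγp
  have h2 : γ * B + ρ * h * p - γ * p ^ 2 < 0 := by
    have e1 : (1 - 2 * γ) + h * (γ - 2) < 0 := by
      have : h * (γ - 2) ≤ 0 := mul_nonpos_iff.mpr (Or.inl ⟨hh0.le, by linarith⟩)
      linarith only [this, hγ1]
    have e2 : ρ ^ 2 * (h - 1) * ((1 - 2 * γ) + h * (γ - 2)) < 0 := by
      apply mul_neg_of_pos_of_neg _ e1
      exact mul_pos (pow_pos hρ 2) (by linarith only [hh1])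
    by_contra hcon
    push_neg at hcon
    have : 0 ≤ γ * (γ * B + ρ * h * p - γ * p ^ 2) := mul_nonneg (by linarith only [hγ1]) hcon
    linarith only [this, hfin, e2]
  have h3 : ρ * h * (s ^ 2 * B + p ^ 2 * (1 - s ^ 2)) = p * (γ * B + ρ * h * p - γ * p ^ 2) := by
    linear_combination (B - p ^ 2) * hρhs
  have hsB : s ^ 2 * B + p ^ 2 * (1 - s ^ 2) < 0 := by
    by_contra hcon
    push_neg at hcon
    have : 0 ≤ ρ * h * (s ^ 2 * B + p ^ 2 * (1 - s ^ 2)) := by positivity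
    have hneg : p * (γ * B + ρ * h * p - γ * p ^ 2) < 0 := mul_neg_of_pos_of_neg hp h2
    linarith [h3 ▸ this]
  -- sign handling
  have hσv : -|v1| ≤ σ * v1 := by
    rcases hσ with h1 | h1 <;> rw [h1]
    · simpa using neg_abs_le v1
    · simpa using neg_le_neg (le_abs_self v1)
  have hsqw : (Λ - |v1|) ^ 2 ≤ (Λ + σ * v1) ^ 2 :=
    pow_le_pow_left₀ hΛu0 (by linarith) 2
  -- main algebraic identity
  have hG : (D * (Λ + σ * v1)) ^ 2 + (m1 * (Λ + σ * v1) + σ * p) ^ 2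
      + (m2 * (Λ + σ * v1)) ^ 2 - (E * Λ + σ * m1) ^ 2
      = (Λ + σ * v1) ^ 2 * (Γ ^ 2 * B) + p ^ 2 * (1 - Λ ^ 2) := by
    rw [hD, hm1, hm2, hE, hB]
    linear_combination p ^ 2 * hσ2 - (Λ + σ * v1) ^ 2 * ρ ^ 2 * h ^ 2 * Γ ^ 2 * hΓ2
  -- the multiplied inequality
  have e1 : (Λ - |v1|) ^ 2 * c ^ 2 = N ^ 2 := by
    linear_combination ((Λ - |v1|) * c + N) * hΛu
  have e2 : s ^ 2 * (1 - (v1 ^ 2 + v2 ^ 2)) * (c ^ 2 - (Λ * c) ^ 2) = (1 - s ^ 2) * N ^ 2 := by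
    rw [hΛc]; exact hI
  have hmul : s ^ 2 * (1 - (v1 ^ 2 + v2 ^ 2)) * c ^ 2 *
      ((Λ - |v1|) ^ 2 * (Γ ^ 2 * B) + p ^ 2 * (1 - Λ ^ 2))
      = N ^ 2 * (s ^ 2 * B + p ^ 2 * (1 - s ^ 2)) := by
    linear_combination (s ^ 2 * (1 - (v1 ^ 2 + v2 ^ 2)) * Γ ^ 2 * B) * e1
      + (N ^ 2 * s ^ 2 * B) * hΓ2 + p ^ 2 * e2
  have hfinal : (Λ - |v1|) ^ 2 * (Γ ^ 2 * B) + p ^ 2 * (1 - Λ ^ 2) < 0 := by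
    by_contra hcon
    push_neg at hcon
    have hM : 0 < s ^ 2 * (1 - (v1 ^ 2 + v2 ^ 2)) * c ^ 2 := by positivity
    have h7 : 0 ≤ s ^ 2 * (1 - (v1 ^ 2 + v2 ^ 2)) * c ^ 2 *
        ((Λ - |v1|) ^ 2 * (Γ ^ 2 * B) + p ^ 2 * (1 - Λ ^ 2)) := mul_nonneg hM.le hcon
    have h8 : N ^ 2 * (s ^ 2 * B + p ^ 2 * (1 - s ^ 2)) < 0 :=
      mul_neg_of_pos_of_neg (pow_pos hN0 2) hsB
    linarith [hmul ▸ h7]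
  have hT1 : (Λ + σ * v1) ^ 2 * (Γ ^ 2 * B) ≤ (Λ - |v1|) ^ 2 * (Γ ^ 2 * B) :=
    mul_le_mul_of_nonpos_right hsqw hAneg.le
  have hT : (D * (Λ + σ * v1)) ^ 2 + (m1 * (Λ + σ * v1) + σ * p) ^ 2
      + (m2 * (Λ + σ * v1)) ^ 2 - (E * Λ + σ * m1) ^ 2 < 0 := by
    rw [hG]; linarith
  have hexpr : (D + σ * (D * v1) / Λ) ^ 2 + (m1 + σ * (m1 * v1 + p) / Λ) ^ 2 +
        (m2 + σ * (m2 * v1) / Λ) ^ 2 - (E + σ * m1 / Λ) ^ 2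
      = ((D * (Λ + σ * v1)) ^ 2 + (m1 * (Λ + σ * v1) + σ * p) ^ 2
        + (m2 * (Λ + σ * v1)) ^ 2 - (E * Λ + σ * m1) ^ 2) / Λ ^ 2 := by
    field_simp
    ring
  rw [hexpr]
  exact div_neg_of_neg_of_pos hT (pow_pos hΛ0 2)
end

section
/- Let d ≥ 1 and let q : ℝ × ℝ^d × ℝ → ℝ be defined by q(D, m, E) = E − √(D² + |m|²). Let ū, u ∈ ℝ × ℝ^d × ℝ with q(ū) > 0 and q(u) < 0. Then for every θ ∈ [0, q(ū)/(q(ū) − q(u))], one has q((1−θ)·ū + θ·u) ≥ 0. -/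
/-!
`√(D² + |m|²)` is the Euclidean norm of `(D, m)`, hence convex, so `q` (a linear function minus
it) is concave. Along the segment from `ū` to `u`, concavity bounds `q` below by the affine
interpolation `(1 - θ) q(ū) + θ q(u) = q(ū) - θ (q(ū) - q(u))`, which is nonnegative exactly
for `θ ≤ q(ū) / (q(ū) - q(u))`.
-/

open Set

theorem ConcaveOn.nonneg_of_le_div_sub {E : Type*} [AddCommGroup E] [Module ℝ E]
    {s : Set E} {f : E → ℝ} (hf : ConcaveOn ℝ s f) {x y : E} (hx : x ∈ s) (hy : y ∈ s)
    (hfx : 0 ≤ f x) (hfy : f y < 0) {θ : ℝ} (hθ : θ ∈ Icc 0 (f x / (f x - f y))) :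
    0 ≤ f ((1 - θ) • x + θ • y) := by
  obtain ⟨hθ₀, hθle⟩ := hθ
  have hgap : 0 < f x - f y := by linarith
  have hθgap : θ * (f x - f y) ≤ f x := (le_div_iff₀ hgap).mp hθle
  have hθ₁ : θ ≤ 1 := hθle.trans ((div_le_one hgap).mpr (by linarith))
  calc 0 ≤ (1 - θ) * f x + θ * f y := by linarith
    _ ≤ f ((1 - θ) • x + θ • y) := hf.2 hx hy (by linarith) hθ₀ (by ring)

theorem convexOn_sqrt_sq_add_norm_sq {E : Type*} [SeminormedAddCommGroup E] [NormedSpace ℝ E] :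
    ConvexOn ℝ univ (fun p : ℝ × E => √(p.1 ^ 2 + ‖p.2‖ ^ 2)) :=
  ((convexOn_norm convex_univ).comp_linearMap
    (WithLp.linearEquiv 2 ℝ (ℝ × E)).symm.toLinearMap).congr fun p _ => by
      simp [WithLp.prod_norm_eq_of_L2]

theorem concaveOn_sub_sqrt_sq_add_norm_sq {E : Type*} [SeminormedAddCommGroup E]
    [NormedSpace ℝ E] :
    ConcaveOn ℝ univ (fun x : ℝ × E × ℝ => x.2.2 - √(x.1 ^ 2 + ‖x.2.1‖ ^ 2)) :=
  ((LinearMap.snd ℝ E ℝ ∘ₗ LinearMap.snd ℝ ℝ (E × ℝ)).concaveOn convex_univ).sub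
    (convexOn_sqrt_sq_add_norm_sq.comp_linearMap (LinearMap.id.prodMap (LinearMap.fst ℝ E ℝ)) :)

theorem scaling_limiter_general (d : ℕ)
    (q : ℝ × EuclideanSpace ℝ (Fin d) × ℝ → ℝ)
    (hq : ∀ x : ℝ × EuclideanSpace ℝ (Fin d) × ℝ,
      q x = x.2.2 - Real.sqrt (x.1 ^ 2 + ‖x.2.1‖ ^ 2))
    (ubar u : ℝ × EuclideanSpace ℝ (Fin d) × ℝ)
    (hubar : 0 < q ubar) (hu : q u < 0)
    (θ : ℝ) (hθ : θ ∈ Set.Icc (0 : ℝ) (q ubar / (q ubar - q u))) :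
    0 ≤ q ((1 - θ) • ubar + θ • u) := by
  have hconcave : ConcaveOn ℝ univ q := funext hq ▸ concaveOn_sub_sqrt_sq_add_norm_sq
  exact hconcave.nonneg_of_le_div_sub (mem_univ _) (mem_univ _) hubar.le hu hθ

/-- Scaling-limiter principle: if the mean state `ū` satisfies `q(ū) > 0` and
a point value `u` satisfies `q(u) < 0`, then for any
`θ ∈ [0, q(ū)/(q(ū) - q(u))]` the convex combination `(1-θ) ū + θ u`
satisfies `q ≥ 0`, where `q(D, m, E) = E - √(D² + |m|²)`. -/
theorem scaling_limiter (d : ℕ) (hd : 1 ≤ d)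
    (q : ℝ × EuclideanSpace ℝ (Fin d) × ℝ → ℝ)
    (hq : ∀ x : ℝ × EuclideanSpace ℝ (Fin d) × ℝ,
      q x = x.2.2 - Real.sqrt (x.1 ^ 2 + ‖x.2.1‖ ^ 2))
    (ubar u : ℝ × EuclideanSpace ℝ (Fin d) × ℝ)
    (hubar : 0 < q ubar) (hu : q u < 0)
    (θ : ℝ) (hθ : θ ∈ Set.Icc (0 : ℝ) (q ubar / (q ubar - q u))) :
    0 ≤ q ((1 - θ) • ubar + θ • u) :=
  scaling_limiter_general d q hq ubar u hubar hu θ hθ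
end
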